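/- arXiv:2509.09409 — 2 statements merged into one kernel-verified Lean document; each statement's English description precedes it below -/
import Mathlib

section
/- For every integer m ≥ 3, every point p ∈ L, and every function f : ℝ³ → ℝ which is differentiable at p and satisfies f(Ax) = f(x) for all x ∈ ℝ³ and all A ∈ 𝒢ₘ, the derivative of f at p vanishes on the orthogonal complement of p: Df(p)(v) = 0 for every v ∈ ℝ³ with ⟨v, p⟩ = 0. -/
/- STATEMENT 5: For m ≥ 3, p ∈ L = L₀ ∪ L₂, and f : ℝ³ → ℝ differentiable at p and
invariant under every A in the stabilizer 𝒢ₘ of L in O(3), the derivative of f at p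
vanishes on the orthogonal complement of p. -/

noncomputable section
open Real Set

abbrev E3 := EuclideanSpace ℝ (Fin 3)

def pt3 (a b c : ℝ) : E3 := (WithLp.equiv 2 (Fin 3 → ℝ)).symm ![a, b, c]

/-- The m equatorial points. -/
def L0 (m : ℕ) : Set E3 :=
  {p | ∃ j : ℤ, p = pt3 (Real.cos (2 * π * j / m)) (Real.sin (2 * π * j / m)) 0}

/-- The two poles. -/
def L2 : Set E3 := {pt3 0 0 1, pt3 0 0 (-1)}

/-- The singular set L = L₀ ∪ L₂. -/
def Lpts (m : ℕ) : Set E3 := L0 m ∪ L2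

namespace Stmt5

@[simp] lemma pt3_apply0 (a b c : ℝ) : pt3 a b c 0 = a := rfl
@[simp] lemma pt3_apply1 (a b c : ℝ) : pt3 a b c 1 = b := rfl
@[simp] lemma pt3_apply2 (a b c : ℝ) : pt3 a b c 2 = c := rfl

lemma E3_ext {x y : E3} (h0 : x 0 = y 0) (h1 : x 1 = y 1) (h2 : x 2 = y 2) : x = y := by
  ext i; fin_cases i <;> assumption

/-- The map (x,y,z) ↦ (cx+sy, sx−cy, εz). -/
def Tfun (c s ε : ℝ) : E3 → E3 :=
  fun x => pt3 (c * x 0 + s * x 1) (s * x 0 - c * x 1) (ε * x 2)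

lemma Tfun_invol {c s ε : ℝ} (h : c ^ 2 + s ^ 2 = 1) (hε : ε ^ 2 = 1) :
    Function.Involutive (Tfun c s ε) := by
  intro x
  refine E3_ext ?_ ?_ ?_ <;> simp only [Tfun, pt3_apply0, pt3_apply1, pt3_apply2]
  · linear_combination x 0 * h
  · linear_combination x 1 * h
  · linear_combination x 2 * hε

def Tlin (c s ε : ℝ) : E3 →ₗ[ℝ] E3 where
  toFun := Tfun c s ε
  map_add' x y := by
    refine E3_ext ?_ ?_ ?_ <;>
      simp only [Tfun, PiLp.add_apply, pt3_apply0, pt3_apply1, pt3_apply2] <;> ring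
  map_smul' r x := by
    refine E3_ext ?_ ?_ ?_ <;>
      simp only [Tfun, PiLp.smul_apply, smul_eq_mul, RingHom.id_apply,
        pt3_apply0, pt3_apply1, pt3_apply2] <;> ring

def Tiso (c s ε : ℝ) (h : c ^ 2 + s ^ 2 = 1) (hε : ε ^ 2 = 1) : E3 ≃ₗᵢ[ℝ] E3 :=
  ⟨LinearEquiv.ofInvolutive (Tlin c s ε) (Tfun_invol h hε), by
    intro x
    rw [EuclideanSpace.norm_eq, EuclideanSpace.norm_eq]
    congr 1
    rw [Fin.sum_univ_three, Fin.sum_univ_three]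
    show ‖Tfun c s ε x 0‖ ^ 2 + ‖Tfun c s ε x 1‖ ^ 2 + ‖Tfun c s ε x 2‖ ^ 2 = _
    simp only [Tfun, pt3_apply0, pt3_apply1, pt3_apply2, Real.norm_eq_abs, sq_abs]
    linear_combination (x 0 ^ 2 + x 1 ^ 2) * h + x 2 ^ 2 * hε⟩

@[simp] lemma Tiso_apply (c s ε : ℝ) (h hε) (x : E3) :
    Tiso c s ε h hε x = Tfun c s ε x := rfl

lemma image_eq_of_invol {g : E3 → E3} (hg : Function.Involutive g) {S : Set E3}
    (hmaps : ∀ x ∈ S, g x ∈ S) : g '' S = S := by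
  ext y
  constructor
  · rintro ⟨x, hx, rfl⟩; exact hmaps x hx
  · intro hy; exact ⟨g y, hmaps y hy, hg y⟩

/-- Tfun with c,s the cos/sin of 2π(2j)/m maps L to L. -/
lemma Tfun_maps (m : ℕ) (j : ℤ) {ε : ℝ} (hε : ε = 1 ∨ ε = -1) :
    ∀ x ∈ Lpts m, Tfun (Real.cos (2 * π * (2 * j) / m)) (Real.sin (2 * π * (2 * j) / m)) ε x
      ∈ Lpts m := by
  intro x hx
  set c := Real.cos (2 * π * (2 * j) / m) with hc
  set s := Real.sin (2 * π * (2 * j) / m) with hs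
  rcases hx with ⟨k, rfl⟩ | hx
  · left
    refine ⟨2 * j - k, ?_⟩
    have hang : 2 * π * ((2 * j - k : ℤ) : ℝ) / m = 2 * π * (2 * j) / m - 2 * π * k / m := by
      push_cast; ring
    refine E3_ext ?_ ?_ ?_ <;>
      simp only [Tfun, pt3_apply0, pt3_apply1, pt3_apply2, hang, Real.cos_sub, Real.sin_sub,
        mul_zero, hc, hs] <;> ring
  · right
    simp only [L2, mem_insert_iff, mem_singleton_iff] at hx ⊢
    rcases hx with rfl | rfl <;> rcases hε with rfl | rfl
    · exact Or.inl (E3_ext (by simp [Tfun]) (by simp [Tfun]) (by simp [Tfun]))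
    · exact Or.inr (E3_ext (by simp [Tfun]) (by simp [Tfun]) (by simp [Tfun]))
    · exact Or.inr (E3_ext (by simp [Tfun]) (by simp [Tfun]) (by simp [Tfun]))
    · exact Or.inl (E3_ext (by simp [Tfun]) (by simp [Tfun]) (by simp [Tfun]))

end Stmt5

set_option maxHeartbeats 1600000 in
open Stmt5 in
theorem statement5 (m : ℕ) (hm : 3 ≤ m) (p : E3) (hp : p ∈ Lpts m)
    (f : E3 → ℝ) (hdiff : DifferentiableAt ℝ f p)
    (hinv : ∀ A : E3 ≃ₗᵢ[ℝ] E3, A '' Lpts m = Lpts m → ∀ x : E3, f (A x) = f x) :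
    ∀ v : E3, (inner ℝ v p : ℝ) = 0 → fderiv ℝ f p v = 0 := by
  have key : ∀ A : E3 ≃ₗᵢ[ℝ] E3, A '' Lpts m = Lpts m → A p = p →
      ∀ w : E3, fderiv ℝ f p (A w) = fderiv ℝ f p w := by
    intro A hL hfix w
    have hfa : f ∘ A = f := funext (hinv A hL)
    have hA : HasFDerivAt (⇑A) (A.toContinuousLinearEquiv : E3 →L[ℝ] E3) p :=
      A.hasFDerivAt
    have hfp : HasFDerivAt f (fderiv ℝ f p) (A p) := by
      rw [hfix]; exact hdiff.hasFDerivAt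
    have h1 : HasFDerivAt (f ∘ A)
        ((fderiv ℝ f p).comp (A.toContinuousLinearEquiv : E3 →L[ℝ] E3)) p :=
      hfp.comp p hA
    rw [hfa] at h1
    have h2 := hdiff.hasFDerivAt.unique h1
    calc fderiv ℝ f p (A w)
        = ((fderiv ℝ f p).comp (A.toContinuousLinearEquiv : E3 →L[ℝ] E3)) w := rfl
      _ = fderiv ℝ f p w := by rw [← h2]
  have hm0 : (0 : ℝ) < m := by positivity
  intro v hv
  rcases hp with ⟨j, rfl⟩ | hp
  · -- equatorial point: rotation by π about the axis through p negates v
    set β := 2 * π * (j : ℝ) / m with hβ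
    set c := Real.cos (2 * π * (2 * (j : ℝ)) / m) with hc
    set s := Real.sin (2 * π * (2 * (j : ℝ)) / m) with hs
    have hang : 2 * π * (2 * (j : ℝ)) / m = 2 * β := by rw [hβ]; push_cast; ring
    have hcs : c ^ 2 + s ^ 2 = 1 := by rw [hc, hs]; exact Real.cos_sq_add_sin_sq _
    have hc2 : c = 2 * Real.cos β ^ 2 - 1 := by rw [hc, hang, Real.cos_two_mul]
    have hs2 : s = 2 * Real.sin β * Real.cos β := by
      rw [hs, hang]; exact Real.sin_two_mul β
    have hε : (-1 : ℝ) ^ 2 = 1 := by norm_num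
    set A := Tiso c s (-1) hcs hε with hA
    have hLA : (A : E3 → E3) '' Lpts m = Lpts m := by
      refine image_eq_of_invol (Tfun_invol hcs hε) ?_
      intro x hx
      exact Tfun_maps m j (Or.inr rfl) x hx
    have hfix : A (pt3 (Real.cos β) (Real.sin β) 0) = pt3 (Real.cos β) (Real.sin β) 0 := by
      refine E3_ext ?_ ?_ ?_ <;>
        simp only [hA, Tiso_apply, Tfun, pt3_apply0, pt3_apply1, pt3_apply2, hc2, hs2]
      · linear_combination (2 * Real.cos β) * (Real.sin_sq_add_cos_sq β)
      · ring
      · ring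
    have hortho : v 0 * Real.cos β + v 1 * Real.sin β = 0 := by
      simp only [PiLp.inner_apply, RCLike.inner_apply, conj_trivial, Fin.sum_univ_three,
        pt3_apply0, pt3_apply1, pt3_apply2, mul_zero, add_zero] at hv
      linarith
    have hAv : A v = -v := by
      refine E3_ext ?_ ?_ ?_ <;>
        simp only [hA, Tiso_apply, Tfun, pt3_apply0, pt3_apply1, pt3_apply2, PiLp.neg_apply,
          hc2, hs2]
      · linear_combination 2 * Real.cos β * hortho
      · linear_combination 2 * Real.sin β * hortho - 2 * v 1 * (Real.sin_sq_add_cos_sq β)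
      · ring
    have hk := key A hLA hfix v
    rw [hAv, map_neg] at hk
    linarith
  · -- pole
    have hv2 : v 2 = 0 := by
      rcases hp with rfl | rfl
      · simp only [PiLp.inner_apply, RCLike.inner_apply, conj_trivial, Fin.sum_univ_three,
          pt3_apply0, pt3_apply1, pt3_apply2, mul_zero, mul_one, zero_add, add_zero] at hv
        linarith
      · simp only [PiLp.inner_apply, RCLike.inner_apply, conj_trivial, Fin.sum_univ_three,
          pt3_apply0, pt3_apply1, pt3_apply2, mul_zero, mul_one, mul_neg,
          zero_add, add_zero] at hv
        linarith
    have hε1 : (1 : ℝ) ^ 2 = 1 := one_pow 2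
    have hcs0 : Real.cos (2 * π * (2 * ((0:ℤ) : ℝ)) / m) ^ 2
        + Real.sin (2 * π * (2 * ((0:ℤ) : ℝ)) / m) ^ 2 = 1 := Real.cos_sq_add_sin_sq _
    set A0 := Tiso _ _ 1 hcs0 hε1 with hA0
    have hcs1 : Real.cos (2 * π * (2 * ((1:ℤ) : ℝ)) / m) ^ 2
        + Real.sin (2 * π * (2 * ((1:ℤ) : ℝ)) / m) ^ 2 = 1 := Real.cos_sq_add_sin_sq _
    set A1 := Tiso _ _ 1 hcs1 hε1 with hA1
    have hLA0 : (A0 : E3 → E3) '' Lpts m = Lpts m :=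
      image_eq_of_invol (Tfun_invol hcs0 hε1) (Tfun_maps m 0 (Or.inl rfl))
    have hLA1 : (A1 : E3 → E3) '' Lpts m = Lpts m :=
      image_eq_of_invol (Tfun_invol hcs1 hε1) (Tfun_maps m 1 (Or.inl rfl))
    have hz0 : 2 * π * (2 * ((0:ℤ) : ℝ)) / m = 0 := by push_cast; ring
    have hfix0 : A0 p = p := by
      rcases hp with rfl | rfl <;> refine E3_ext ?_ ?_ ?_ <;>
        simp [hA0, Tiso_apply, Tfun, hz0]
    have hfix1 : A1 p = p := by
      rcases hp with rfl | rfl <;> refine E3_ext ?_ ?_ ?_ <;>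
        simp [hA1, Tiso_apply, Tfun]
    set ℓ := fderiv ℝ f p with hℓ
    set e0 : E3 := EuclideanSpace.single 0 1 with he0
    set e1 : E3 := EuclideanSpace.single 1 1 with he1
    have hA0e1 : A0 e1 = -e1 := by
      refine E3_ext ?_ ?_ ?_ <;>
        simp [hA0, Tiso_apply, Tfun, he1, EuclideanSpace.single_apply, hz0]
    have hb : ℓ e1 = 0 := by
      have hk := key A0 hLA0 hfix0 e1
      rw [hA0e1, map_neg] at hk
      linarith
    set c1 := Real.cos (2 * π * (2 * ((1:ℤ) : ℝ)) / m) with hc1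
    set s1 := Real.sin (2 * π * (2 * ((1:ℤ) : ℝ)) / m) with hs1
    have hA1e0 : A1 e0 = c1 • e0 + s1 • e1 := by
      refine E3_ext ?_ ?_ ?_ <;>
        simp [hA1, Tiso_apply, Tfun, he0, he1, EuclideanSpace.single_apply, hc1, hs1]
    have hc1ne : c1 ≠ 1 := by
      rw [hc1]
      have hmr : (3 : ℝ) ≤ m := by exact_mod_cast hm
      have harg : 2 * π * (2 * ((1:ℤ) : ℝ)) / m = 4 * π / m := by push_cast; ring
      rw [harg]
      have h1 : (0 : ℝ) < 4 * π / m := by positivity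
      have h2 : 4 * π / m < 2 * π := by
        rw [div_lt_iff₀ hm0]
        nlinarith [Real.pi_pos]
      intro hcontra
      have := (Real.cos_eq_one_iff_of_lt_of_lt (by linarith) h2).mp hcontra
      linarith
    have ha : ℓ e0 = 0 := by
      have hk := key A1 hLA1 hfix1 e0
      rw [hA1e0, map_add, map_smul, map_smul] at hk
      simp only [smul_eq_mul] at hk
      have h3 : (c1 - 1) * ℓ e0 = 0 := by linear_combination hk - s1 * hb
      rcases mul_eq_zero.mp h3 with h | h
      · exact absurd (by linarith) hc1ne
      · exact h
    have hvdecomp : v = v 0 • e0 + v 1 • e1 := by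
      refine E3_ext ?_ ?_ ?_ <;>
        simp [he0, he1, EuclideanSpace.single_apply, hv2]
    show ℓ v = 0
    rw [hvdecomp, map_add, map_smul, map_smul]
    simp [ha, hb]
end
end

section
/- There is a constant C such that for all r ∈ (0, 1/10), |1 + cos(r)·log tan(r/2) − log(e·r/2)| ≤ C·r²·|log r|. -/
/-! Put `x = r / 2` and `L = log (tan x)`; since `log (e r / 2) = 1 + log x`, the quantity inside the
absolute value is `(L - log x) + (1 - cos r) (-L)`. On `(0, 1]` one has `x ≤ tan x ≤ x (1 + x²)`, so
the first term lies in `[0, x²]`, and `0 < tan x < 1` with `1 - cos r ≤ r² / 2` puts the second in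
`[0, (r² / 2) (log 2 - log r)]`. For `r < 1/10` both bounds are `O(r² |log r|)`. -/

noncomputable section
open Real Set

namespace Real

lemma tan_le_mul_one_add_sq {x : ℝ} (hx0 : 0 < x) (hx1 : x ≤ 1) : tan x ≤ x * (1 + x ^ 2) := by
  have hcos_lb : 1 - x ^ 2 / 2 ≤ cos x := one_sub_sq_div_two_le_cos
  have hcos_pos : 0 < cos x := by nlinarith
  rw [tan_eq_sin_div_cos, div_le_iff₀ hcos_pos]
  have hsin : sin x < x := sin_lt hx0
  have hcos_mul : x * (1 + x ^ 2) * (1 - x ^ 2 / 2) ≤ x * (1 + x ^ 2) * cos x :=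
    mul_le_mul_of_nonneg_left hcos_lb (by positivity)
  -- `x (1 + x²) (1 - x²/2) = x + x³ (1 - x²) / 2 ≥ x`
  have hquintic : 0 ≤ x ^ 3 * (1 - x ^ 2) := mul_nonneg (by positivity) (by nlinarith)
  linarith

lemma log_tan_le_log_add_sq {x : ℝ} (hx0 : 0 < x) (hx1 : x ≤ 1) :
    log (tan x) ≤ log x + x ^ 2 :=
  calc log (tan x) ≤ log (x * (1 + x ^ 2)) :=
        log_le_log (tan_pos_of_pos_of_lt_pi_div_two hx0 (by linarith [pi_gt_three]))
          (tan_le_mul_one_add_sq hx0 hx1)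
    _ = log x + log (1 + x ^ 2) := log_mul hx0.ne' (by positivity)
    _ ≤ log x + x ^ 2 := by
        linarith [log_le_sub_one_of_pos (by positivity : (0 : ℝ) < 1 + x ^ 2)]

lemma log_tan_neg {x : ℝ} (hx0 : 0 < x) (hx1 : x ≤ 1 / 2) : log (tan x) < 0 := by
  have htan_pos : 0 < tan x := tan_pos_of_pos_of_lt_pi_div_two hx0 (by linarith [pi_gt_three])
  refine log_neg htan_pos ?_
  nlinarith [tan_le_mul_one_add_sq hx0 (by linarith)]

end Real

lemma one_add_cos_mul_log_tan_half_sub_log_eq {r : ℝ} (hr : 0 < r) :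
    1 + cos r * log (tan (r / 2)) - log (exp 1 * r / 2)
      = (log (tan (r / 2)) - log (r / 2)) + (1 - cos r) * -log (tan (r / 2)) := by
  rw [mul_div_assoc, log_mul (exp_ne_zero 1) (half_pos hr).ne', log_exp]
  ring

lemma one_add_cos_mul_log_tan_half_sub_log_mem {r : ℝ} (hr0 : 0 < r) (hr1 : r ≤ 1) :
    1 + cos r * log (tan (r / 2)) - log (exp 1 * r / 2)
      ∈ Icc 0 (r ^ 2 / 4 + r ^ 2 / 2 * (log 2 - log r)) := by
  have hx0 : 0 < r / 2 := by positivity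
  have hL_lb : log (r / 2) ≤ log (tan (r / 2)) :=
    log_le_log hx0 (le_tan hx0.le (by linarith [pi_gt_three]))
  have hL_ub : log (tan (r / 2)) ≤ log (r / 2) + (r / 2) ^ 2 :=
    log_tan_le_log_add_sq hx0 (by linarith)
  have hL_neg : log (tan (r / 2)) < 0 := log_tan_neg hx0 (by linarith)
  have hcos_gap : 0 ≤ 1 - cos r ∧ 1 - cos r ≤ r ^ 2 / 2 :=
    ⟨by linarith [cos_le_one r], by linarith [one_sub_sq_div_two_le_cos (x := r)]⟩
  have hneg_L_le : -log (tan (r / 2)) ≤ log 2 - log r := by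
    linarith [log_div hr0.ne' two_ne_zero]
  have hsecond : (1 - cos r) * -log (tan (r / 2)) ≤ r ^ 2 / 2 * (log 2 - log r) :=
    mul_le_mul hcos_gap.2 hneg_L_le (by linarith) (by positivity)
  rw [one_add_cos_mul_log_tan_half_sub_log_eq hr0]
  constructor
  · linarith [mul_nonneg hcos_gap.1 (neg_nonneg.2 hL_neg.le)]
  · linarith

theorem statement10 :
    ∃ C : ℝ, ∀ r ∈ Set.Ioo (0:ℝ) (1/10),
      |1 + Real.cos r * Real.log (Real.tan (r / 2)) -
        Real.log (Real.exp 1 * r / 2)| ≤ C * r ^ 2 * |Real.log r| := by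
  refine ⟨5 / 4, fun r ⟨hr0, hr1⟩ => ?_⟩
  obtain ⟨hE_nonneg, hE_le⟩ := one_add_cos_mul_log_tan_half_sub_log_mem hr0 (by linarith)
  have hlog_r : log r ≤ -1 := by
    have hlog_ten : 1 ≤ log 10 := by
      rw [le_log_iff_exp_le (by norm_num)]
      linarith [exp_one_lt_d9]
    linarith [log_lt_log hr0 hr1, log_inv (10 : ℝ), one_div (10 : ℝ)]
  have hlog_two : log 2 ≤ 1 := by linarith [log_two_lt_d9]
  rw [abs_of_nonneg hE_nonneg, abs_of_neg (by linarith)]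
  calc _ ≤ r ^ 2 / 4 + r ^ 2 / 2 * (log 2 - log r) := hE_le
    _ ≤ r ^ 2 / 4 * -log r + r ^ 2 / 2 * (2 * -log r) :=
        add_le_add (le_mul_of_one_le_right (by positivity) (by linarith)) (by gcongr; linarith)
    _ = 5 / 4 * r ^ 2 * -log r := by ring
end
end
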